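/- For every complex number q with 0 < |q| < 1, the E₆ graph series satisfies Σ_{n₁,…,n₆ ≥ 0} q^{n₁n₂+n₁n₃+n₁n₄+n₂n₅+n₃n₆+n₁+n₂+n₃+n₄+n₅+n₆} / ((q)_{n₁}(q)_{n₂}(q)_{n₃}(q)_{n₄}(q)_{n₅}(q)_{n₆}) = q^{-1}/(q)_∞³ · Σ_{n≥1} n·q^n/(1 - q^n). -/

import Mathlib

/-!
Summing over the leaves `n₄, n₅, n₆` of the E₆ graph with Euler's identity
`∑ₙ q^((m+1)n) / (q)ₙ = (q)ₘ / (q)_∞` cancels the Pochhammer symbols of their neighbours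
`n₁, n₂, n₃`. What remains is `(q)_∞⁻³ ∑ q^(n₁n₂ + n₁n₃ + n₁ + n₂ + n₃)`, where `n₂` and `n₃` run
over geometric series of ratio `q^(n₁+1)`; this leaves `q⁻¹ (q)_∞⁻³ ∑ₘ qᵐ / (1 - qᵐ)²`, and that
Lambert series equals `∑ₙ n qⁿ / (1 - qⁿ)`.
-/

/-- The finite q-Pochhammer symbol `(q)_n = ∏_{j=1}^n (1 - q^j)`. -/
noncomputable def qp (q : ℂ) (n : ℕ) : ℂ := ∏ j ∈ Finset.range n, (1 - q ^ (j + 1))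

/-- The infinite q-Pochhammer symbol `(q)_∞ = ∏_{j=1}^∞ (1 - q^j)`. -/
noncomputable def qpInf (q : ℂ) : ℂ := ∏' j : ℕ, (1 - q ^ (j + 1))

open Filter Topology

/-- Both sides are `∑ σ₁(n) qⁿ`. -/
lemma tsum_pow_div_one_sub_pow_sq {𝕜 : Type*} [NontriviallyNormedField 𝕜] [CompleteSpace 𝕜]
    [NormSMulClass ℤ 𝕜] {q : 𝕜} (hq : ‖q‖ < 1) :
    ∑' n : ℕ, q ^ (n + 1) / (1 - q ^ (n + 1)) ^ 2
      = ∑' n : ℕ, ((n : 𝕜) + 1) * q ^ (n + 1) / (1 - q ^ (n + 1)) := by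
  have inner (d : ℕ+) : ∑' c : ℕ+, ((c : ℕ) : 𝕜) ^ 1 * q ^ ((d : ℕ) * c) =
      q ^ (d : ℕ) / (1 - q ^ (d : ℕ)) ^ 2 := by
    have hd : ‖q ^ (d : ℕ)‖ < 1 := by
      simpa using pow_lt_one₀ (norm_nonneg q) hq d.ne_zero
    rw [← tsum_coe_mul_geometric_of_norm_lt_one hd,
      ← tsum_zero_pnat_eq_tsum_nat (hasSum_coe_mul_geometric_of_norm_lt_one hd).summable]
    simp [pow_mul]
  have h := (tsum_prod_pow_eq_tsum_sigma 1 hq).trans (tsum_pow_div_one_sub_eq_tsum_sigma hq 1).symm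
  rw [tsum_congr inner] at h
  simp only [pow_one] at h
  rw [tsum_pnat_eq_tsum_succ (f := fun n => q ^ n / (1 - q ^ n) ^ 2),
    tsum_pnat_eq_tsum_succ (f := fun n => (n : 𝕜) * q ^ n / (1 - q ^ n))] at h
  simpa using h

section
variable {q : ℂ}

lemma norm_pow_succ_lt_one (hq : ‖q‖ < 1) (n : ℕ) : ‖q ^ (n + 1)‖ < 1 := by
  rw [norm_pow]
  exact pow_lt_one₀ (norm_nonneg q) hq n.succ_ne_zero

lemma one_sub_pow_succ_ne_zero (hq : ‖q‖ < 1) (n : ℕ) : 1 - q ^ (n + 1) ≠ 0 :=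
  sub_ne_zero.2 fun h => by simpa [← h] using norm_pow_succ_lt_one hq n

lemma qp_succ (n : ℕ) : qp q (n + 1) = qp q n * (1 - q ^ (n + 1)) :=
  Finset.prod_range_succ _ n

lemma qp_ne_zero (hq : ‖q‖ < 1) (n : ℕ) : qp q n ≠ 0 :=
  Finset.prod_ne_zero_iff.2 fun j _ => one_sub_pow_succ_ne_zero hq j

lemma tendsto_qp_qpInf (hq : ‖q‖ < 1) : Tendsto (qp q) atTop (𝓝 (qpInf q)) :=
  (ModularForm.multipliable_one_sub_pow hq).hasProd.tendsto_prod_nat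

lemma qpInf_ne_zero (hq : ‖q‖ < 1) : qpInf q ≠ 0 := by
  refine tprod_one_add_ne_zero_of_summable (f := fun n => -q ^ (n + 1))
    (fun n => by simpa [← sub_eq_add_neg] using one_sub_pow_succ_ne_zero hq n) ?_
  simpa using (summable_nat_add_iff 1).mpr (summable_geometric_of_lt_one (norm_nonneg _) hq)

lemma exists_forall_norm_inv_qp_le (hq : ‖q‖ < 1) : ∃ C, ∀ n, ‖(qp q n)⁻¹‖ ≤ C := by
  obtain ⟨C, hC⟩ := isBounded_iff_forall_norm_le.1 <|
    Metric.isBounded_range_of_tendsto _ ((tendsto_qp_qpInf hq).inv₀ (qpInf_ne_zero hq))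
  exact ⟨C, fun n => hC _ ⟨n, rfl⟩⟩

noncomputable def eulerSeries (q z : ℂ) : ℂ := ∑' n : ℕ, z ^ n / qp q n

lemma summable_eulerSeries (hq : ‖q‖ < 1) {z : ℂ} (hz : ‖z‖ < 1) :
    Summable fun n : ℕ => z ^ n / qp q n := by
  obtain ⟨C, hC⟩ := exists_forall_norm_inv_qp_le hq
  refine Summable.of_norm_bounded ((summable_geometric_of_lt_one (norm_nonneg z) hz).mul_left C)
    fun n => ?_
  rw [div_eq_mul_inv, norm_mul, norm_pow, mul_comm]
  exact mul_le_mul_of_nonneg_right (hC n) (by positivity)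

lemma eulerSeries_mul_left (hq : ‖q‖ < 1) {z : ℂ} (hz : ‖z‖ < 1) :
    eulerSeries q (q * z) = (1 - z) * eulerSeries q z := by
  have hqz : ‖q * z‖ < 1 := by
    rw [norm_mul]; nlinarith [norm_nonneg q, norm_nonneg z]
  have hsum := summable_eulerSeries hq hz
  have hdiff := hsum.sub (summable_eulerSeries hq hqz)
  suffices eulerSeries q z - eulerSeries q (q * z) = z * eulerSeries q z by
    linear_combination -this
  -- termwise `zⁿ (1 - qⁿ) / (q)ₙ`: the `n = 0` term vanishes, and `1 - qⁿ` cancels from `(q)ₙ`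
  rw [eulerSeries, eulerSeries, ← hsum.tsum_sub (summable_eulerSeries hq hqz),
    hdiff.tsum_eq_zero_add, ← tsum_mul_left]
  simp only [pow_zero, sub_self, zero_add]
  refine tsum_congr fun n => ?_
  rw [qp_succ, mul_pow, div_sub_div_same, ← one_sub_mul, mul_comm (1 - q ^ (n + 1)),
    mul_div_mul_right _ _ (one_sub_pow_succ_ne_zero hq n), pow_succ', mul_div_assoc]

lemma tendsto_eulerSeries_nhds_zero (hq : ‖q‖ < 1) : Tendsto (eulerSeries q) (𝓝 0) (𝓝 1) := by
  obtain ⟨C, hC⟩ := exists_forall_norm_inv_qp_le hq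
  have hg : ∑' n : ℕ, (0 : ℂ) ^ n / qp q n = 1 := by
    rw [tsum_eq_single 0 fun n hn => by simp [hn]]
    simp [qp]
  rw [← hg]
  refine tendsto_tsum_of_dominated_convergence
    ((summable_geometric_of_lt_one (by norm_num) (by norm_num : (1 / 2 : ℝ) < 1)).mul_left C)
    (fun n => ((continuous_pow n).div_const _).tendsto 0) ?_
  filter_upwards [Metric.ball_mem_nhds (0 : ℂ) (by norm_num : (0 : ℝ) < 1 / 2)] with z hz n
  rw [mem_ball_zero_iff] at hz
  rw [div_eq_mul_inv, norm_mul, norm_pow, mul_comm]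
  exact mul_le_mul (hC n) (pow_le_pow_left₀ (norm_nonneg z) hz.le n) (by positivity)
    ((norm_nonneg _).trans (hC 0))

lemma eulerSeries_pow_succ_eq_qp_mul (hq : ‖q‖ < 1) (m : ℕ) :
    eulerSeries q (q ^ (m + 1)) = qp q m * eulerSeries q q := by
  induction m with
  | zero => simp [qp]
  | succ m ih =>
    rw [pow_succ', eulerSeries_mul_left hq (norm_pow_succ_lt_one hq m), ih, qp_succ]
    ring

/-- Euler's identity `∑ zⁿ / (q)ₙ = 1 / ∏ⱼ (1 - z qʲ)` at `z = q ^ (m + 1)`. -/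
lemma eulerSeries_pow_succ (hq : ‖q‖ < 1) (m : ℕ) :
    eulerSeries q (q ^ (m + 1)) = qp q m / qpInf q := by
  have hlim₁ : Tendsto (fun m : ℕ => eulerSeries q (q ^ (m + 1))) atTop (𝓝 1) :=
    (tendsto_eulerSeries_nhds_zero hq).comp
      ((tendsto_pow_atTop_nhds_zero_of_norm_lt_one hq).comp (tendsto_add_atTop_nat 1))
  have hlim₂ : Tendsto (fun m : ℕ => eulerSeries q (q ^ (m + 1))) atTop
      (𝓝 (qpInf q * eulerSeries q q)) := by
    simpa only [eulerSeries_pow_succ_eq_qp_mul hq] using (tendsto_qp_qpInf hq).mul_const _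
  have h := tendsto_nhds_unique hlim₂ hlim₁
  rw [eulerSeries_pow_succ_eq_qp_mul hq, eq_div_iff (qpInf_ne_zero hq)]
  linear_combination qp q m * h

lemma tsum_tsum_tsum_pow (hq : ‖q‖ < 1) :
    ∑' (a : ℕ) (b : ℕ) (c : ℕ), q ^ (a * b + a * c + a + b + c)
      = ∑' a : ℕ, q ^ a / (1 - q ^ (a + 1)) ^ 2 := by
  refine tsum_congr fun a => ?_
  have hgeom : ∑' n : ℕ, (q ^ (a + 1)) ^ n = (1 - q ^ (a + 1))⁻¹ :=
    tsum_geometric_of_norm_lt_one (norm_pow_succ_lt_one hq a)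
  have hsplit (b c : ℕ) : q ^ (a * b + a * c + a + b + c)
      = q ^ a * (q ^ (a + 1)) ^ b * (q ^ (a + 1)) ^ c := by ring
  simp only [hsplit, tsum_mul_left, tsum_mul_right, hgeom]
  rw [div_eq_mul_inv, ← inv_pow]
  ring

lemma tsum_leaves_E6 (hq : ‖q‖ < 1) (n₁ n₂ n₃ : ℕ) :
    ∑' (n₄ : ℕ) (n₅ : ℕ) (n₆ : ℕ),
      q ^ (n₁ * n₂ + n₁ * n₃ + n₁ * n₄ + n₂ * n₅ + n₃ * n₆ + n₁ + n₂ + n₃ + n₄ + n₅ + n₆) /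
        (qp q n₁ * qp q n₂ * qp q n₃ * qp q n₄ * qp q n₅ * qp q n₆)
      = q ^ (n₁ * n₂ + n₁ * n₃ + n₁ + n₂ + n₃) / qpInf q ^ 3 := by
  have hsplit (n₄ n₅ n₆ : ℕ) :
      q ^ (n₁ * n₂ + n₁ * n₃ + n₁ * n₄ + n₂ * n₅ + n₃ * n₆ + n₁ + n₂ + n₃ + n₄ + n₅ + n₆) /
        (qp q n₁ * qp q n₂ * qp q n₃ * qp q n₄ * qp q n₅ * qp q n₆)
      = q ^ (n₁ * n₂ + n₁ * n₃ + n₁ + n₂ + n₃) / (qp q n₁ * qp q n₂ * qp q n₃) *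
        ((q ^ (n₁ + 1)) ^ n₄ / qp q n₄ * ((q ^ (n₂ + 1)) ^ n₅ / qp q n₅ *
          ((q ^ (n₃ + 1)) ^ n₆ / qp q n₆))) := by
    ring
  have hE (m : ℕ) : ∑' n : ℕ, (q ^ (m + 1)) ^ n / qp q n = qp q m / qpInf q :=
    eulerSeries_pow_succ hq m
  have hI := qpInf_ne_zero hq
  simp only [hsplit, tsum_mul_left, tsum_mul_right, hE]
  field_simp [qp_ne_zero hq n₁, qp_ne_zero hq n₂, qp_ne_zero hq n₃]

end

theorem E6_graph_series (q : ℂ) (h0 : 0 < ‖q‖) (h1 : ‖q‖ < 1) :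
    (∑' (n₁ : ℕ) (n₂ : ℕ) (n₃ : ℕ) (n₄ : ℕ) (n₅ : ℕ) (n₆ : ℕ),
      q ^ (n₁ * n₂ + n₁ * n₃ + n₁ * n₄ + n₂ * n₅ + n₃ * n₆ + n₁ + n₂ + n₃ + n₄ + n₅ + n₆) /
        (qp q n₁ * qp q n₂ * qp q n₃ * qp q n₄ * qp q n₅ * qp q n₆))
      = q⁻¹ / (qpInf q) ^ 3 *
          ∑' n : ℕ, ((n : ℂ) + 1) * q ^ (n + 1) / (1 - q ^ (n + 1)) := by
  have hq0 : q ≠ 0 := norm_pos_iff.1 h0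
  calc _ = ∑' (n₁ : ℕ) (n₂ : ℕ) (n₃ : ℕ), q ^ (n₁ * n₂ + n₁ * n₃ + n₁ + n₂ + n₃) / qpInf q ^ 3 :=
        tsum_congr fun n₁ => tsum_congr fun n₂ => tsum_congr fun n₃ => tsum_leaves_E6 h1 n₁ n₂ n₃
    _ = (∑' n : ℕ, q ^ n / (1 - q ^ (n + 1)) ^ 2) / qpInf q ^ 3 := by
        simp only [tsum_div_const, tsum_tsum_tsum_pow h1]
    _ = _ := by
        rw [← tsum_pow_div_one_sub_pow_sq h1, ← tsum_mul_left, ← tsum_div_const]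
        refine tsum_congr fun n => ?_
        field_simp
        ring
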